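/- Corners lie on the boundary: if G is a finite median graph and v is a corner of G with cube C(v) and opposite vertex \overline{v}, then every vertex of C(v) except possibly \overline{v} belongs to the combinatorial boundary ∂X of the cube complex X = X_cube(G); in particular every corner of G is a boundary vertex. -/

import Mathlib

/-!
Let `φ : C ≃ Q_n` and let `x ≠ o` differ from `o` in coordinate `i`. Since `d(v, o) = n`, the
corner `v` differs from `o` in every coordinate, so the facet `F = {y ∈ C | y_i = v_i}` of `C`
contains both `x` and `v`. The only cell of twice the size above `F` is `C`: any such cell is a
cube through `v`, and in a median graph every cube through a corner `v` lies in `C(v)`, because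
a vertex closing a square over three vertices of `C(v)` must be the square's completion inside
`C(v)` (median graphs contain no `K_{2,3}`).
-/

/-- The metric interval between `u` and `v` in a graph `G`. -/
def interval {V : Type*} (G : SimpleGraph V) (u v : V) : Set V :=
  {w | G.dist u w + G.dist w v = G.dist u v}

/-- A graph is median if every triple of vertices has a unique median. -/
def MedianGraph {V : Type*} (G : SimpleGraph V) : Prop :=
  ∀ x y z : V, ∃! m : V,
    m ∈ interval G x y ∧ m ∈ interval G y z ∧ m ∈ interval G z x

/-- The hypercube graph `Q_n`. -/
def cubeGraph (n : ℕ) : SimpleGraph (Fin n → Bool) :=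
  SimpleGraph.fromRel (fun u v => (Finset.univ.filter fun i => u i ≠ v i).card = 1)

/-- `C` is (the vertex set of) a cube of `G`. -/
def IsCube {V : Type*} (G : SimpleGraph V) (C : Finset V) : Prop :=
  ∃ k : ℕ, Nonempty (G.induce (C : Set V) ≃g cubeGraph k)

/-- The cells of the cube complex `X_cube(G)`, identified with their vertex sets. -/
def cells {V : Type*} (G : SimpleGraph V) : Set (Finset V) :=
  {C | C.Nonempty ∧ IsCube G C}

/-- A cell is maximal if it is maximal by inclusion among cells. -/
def IsMaximalCell {V : Type*} (G : SimpleGraph V) (C : Finset V) : Prop :=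
  C ∈ cells G ∧ ∀ D ∈ cells G, ¬ C ⊂ D

/-- The vertices of the combinatorial boundary `∂X` of `X = X_cube(G)`: vertices of some
non-maximal cell that is a facet of exactly one cell (a facet of a cube has half as many
vertices). -/
def boundaryVertices {V : Type*} (G : SimpleGraph V) : Set V :=
  {x | ∃ C ∈ cells G, x ∈ C ∧ ¬ IsMaximalCell G C ∧
        ∃! D : Finset V, D ∈ cells G ∧ C ⊂ D ∧ D.card = 2 * C.card}


open Finset Function SimpleGraph

section Hypercube

variable {n : ℕ}

lemma cubeGraph_adj {u v : Fin n → Bool} : (cubeGraph n).Adj u v ↔ hammingDist u v = 1 := by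
  change u ≠ v ∧ (hammingDist u v = 1 ∨ hammingDist v u = 1) ↔ _
  rw [hammingDist_comm v u, or_self]
  exact and_iff_right_of_imp fun h => hammingDist_ne_zero.1 (by omega)

lemma hammingDist_update_self {x : Fin n → Bool} {i : Fin n} {c : Bool} (hc : c ≠ x i) :
    hammingDist x (update x i c) = 1 := by
  rw [hammingDist, card_eq_one]
  refine ⟨i, eq_singleton_iff_unique_mem.2 ⟨by simpa using hc.symm, fun k hk => ?_⟩⟩
  by_contra hki
  simp [update_of_ne hki] at hk

lemma hammingDist_update_lt {u p : Fin n → Bool} {i : Fin n} (hi : u i ≠ p i) :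
    hammingDist u (update p i (u i)) < hammingDist u p := by
  refine card_lt_card ⟨fun k hk => ?_, fun h => by simpa using h (mem_filter.2 ⟨mem_univ i, hi⟩)⟩
  by_cases hki : k = i
  · simp [hki] at hk
  · simpa [update_of_ne hki] using hk

lemma cubeGraph_exists_walk (u v : Fin n → Bool) :
    ∃ w : (cubeGraph n).Walk u v, w.length ≤ hammingDist u v := by
  induction h : hammingDist u v using Nat.strong_induction_on generalizing u with
  | _ t ih =>
  by_cases huv : u = v
  · subst huv
    exact ⟨.nil, by simp_all⟩
  obtain ⟨i, hi⟩ : ∃ i, u i ≠ v i := not_forall.1 fun h => huv (funext h)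
  have hlt := hammingDist_update_lt (Ne.symm hi)
  rw [hammingDist_comm v, hammingDist_comm v] at hlt
  obtain ⟨w, hw⟩ := ih _ (h ▸ hlt) _ rfl
  have hadj : (cubeGraph n).Adj u (update u i (v i)) :=
    cubeGraph_adj.2 (hammingDist_update_self (Ne.symm hi))
  exact ⟨.cons hadj w, by rw [Walk.length_cons]; omega⟩

/-- The fourth vertex is `w₁ + w₂ + z`, computed coordinatewise in `𝔽₂`. -/
lemma cubeGraph_exists_square {z w₁ w₂ : Fin n → Bool} (h₁ : (cubeGraph n).Adj z w₁)
    (h₂ : (cubeGraph n).Adj z w₂) (hne : w₁ ≠ w₂) :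
    ∃ r, r ≠ z ∧ (cubeGraph n).Adj r w₁ ∧ (cubeGraph n).Adj r w₂ := by
  have hr : ∀ {a b c d : Fin n → Bool}, (∀ k, (a k ≠ b k ↔ c k ≠ d k)) →
      hammingDist a b = hammingDist c d := fun h => by
    simp only [hammingDist, h]
  have hxor : ∀ a b c : Bool, (xor (xor a b) c ≠ a ↔ c ≠ b) ∧ (xor (xor a b) c ≠ b ↔ c ≠ a) ∧
      (xor (xor a b) c ≠ c ↔ a ≠ b) := by decide
  have key k := hxor (w₁ k) (w₂ k) (z k)
  refine ⟨fun k => xor (xor (w₁ k) (w₂ k)) (z k), fun h => hne ?_, ?_, ?_⟩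
  · rw [← hammingDist_eq_zero, ← hr fun k => (key k).2.2, h, hammingDist_self]
  · rw [cubeGraph_adj, hr fun k => (key k).1, ← cubeGraph_adj]; exact h₂
  · rw [cubeGraph_adj, hr fun k => (key k).2.1, ← cubeGraph_adj]; exact h₁

lemma cubeGraph_exists_square_closer {u p : Fin n → Bool} (hp : 2 ≤ hammingDist u p) :
    ∃ a b z, a ≠ b ∧ (cubeGraph n).Adj p a ∧ (cubeGraph n).Adj p b ∧
      (cubeGraph n).Adj z a ∧ (cubeGraph n).Adj z b ∧
      hammingDist u a < hammingDist u p ∧ hammingDist u b < hammingDist u p ∧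
      hammingDist u z < hammingDist u p := by
  obtain ⟨i, hi, j, hj, hij⟩ := one_lt_card.1 hp
  simp only [mem_filter, mem_univ, true_and] at hi hj
  have hi' : u i ≠ update p j (u j) i := by rwa [update_of_ne hij]
  have hj' : u j ≠ update p i (u i) j := by rwa [update_of_ne (Ne.symm hij)]
  have adj_update {x : Fin n → Bool} {k : Fin n} (hk : u k ≠ x k) :
      (cubeGraph n).Adj x (update x k (u k)) :=
    cubeGraph_adj.2 (hammingDist_update_self hk)
  refine ⟨update p i (u i), update p j (u j), update (update p j (u j)) i (u i),
    fun h => hi ?_, adj_update hi, adj_update hj, ?_, (adj_update hi').symm,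
    hammingDist_update_lt hi, hammingDist_update_lt hj,
    (hammingDist_update_lt hi').trans (hammingDist_update_lt hj)⟩
  · simpa [update_of_ne hij] using congrFun h i
  · rw [update_comm hij.symm]
    exact (adj_update hj').symm

lemma hammingDist_insertNth (i : Fin (n + 1)) (b : Bool) (x y : Fin n → Bool) :
    hammingDist (Fin.insertNth (α := fun _ => Bool) i b x) (Fin.insertNth i b y) =
      hammingDist x y := by
  simp only [hammingDist, card_filter, Fin.sum_univ_succAbove _ i, Fin.insertNth_apply_same,
    Fin.insertNth_apply_succAbove, ne_eq, not_true_eq_false, if_false, zero_add]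

def facetEmbedding (i : Fin (n + 1)) (b : Bool) : cubeGraph n ↪g cubeGraph (n + 1) where
  toFun := Fin.insertNth (α := fun _ => Bool) i b
  inj' x y h := hammingDist_eq_zero.1 (by rw [← hammingDist_insertNth i b, h, hammingDist_self])
  map_rel_iff' {x y} := by
    rw [cubeGraph_adj, cubeGraph_adj]
    exact Iff.of_eq (congrArg (· = 1) (hammingDist_insertNth i b x y))

end Hypercube

section CubesInGraph

variable {V : Type*} {G : SimpleGraph V}

lemma isCube_map {k : ℕ} (f : cubeGraph k ↪g G) : IsCube G (univ.map f.toEmbedding) := by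
  have hrange : ((univ.map f.toEmbedding : Finset V) : Set V) = Set.range f := by simp
  exact ⟨k, hrange ▸ ⟨f.isoInduceRange.symm⟩⟩

lemma card_eq_two_pow_of_iso {C : Finset V} {k : ℕ} (φ : G.induce (C : Set V) ≃g cubeGraph k) :
    C.card = 2 ^ k := by
  simpa using Fintype.card_congr φ.toEquiv

lemma dist_le_hammingDist {S : Set V} {n : ℕ} (φ : G.induce S ≃g cubeGraph n) (a b : S) :
    G.dist a b ≤ hammingDist (φ a) (φ b) := by
  obtain ⟨w, hw⟩ := cubeGraph_exists_walk (φ a) (φ b)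
  have := dist_le (w.map ((Embedding.induce S).toHom.comp φ.symm.toHom))
  simp only [Hom.coe_comp, comp_apply, RelHom.coeFn_mk, RelIso.coe_fn_toEquiv,
    RelIso.symm_apply_apply, Embedding.toFun_eq_coe, RelEmbedding.coe_toEmbedding,
    Embedding.comap_apply, Embedding.subtype_apply, Embedding.coeFn_mk] at this
  exact (this.trans_eq (w.length_map _)).trans hw

lemma apply_ne_apply_of_dist_eq {S : Set V} {n : ℕ} (φ : G.induce S ≃g cubeGraph n) {a b : S}
    (h : G.dist a b = n) (i : Fin n) : φ a i ≠ φ b i := by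
  have hle : hammingDist (φ a) (φ b) ≤ n := by
    simpa using hammingDist_le_card_fintype (x := φ a) (y := φ b)
  have hcard : hammingDist (φ a) (φ b) = (univ : Finset (Fin n)).card := by
    have := dist_le_hammingDist φ a b
    simp only [card_univ, Fintype.card_fin]
    omega
  exact card_filter_eq_iff.1 hcard i (mem_univ i)

lemma exists_facet {C : Finset V} {m : ℕ} (φ : G.induce (C : Set V) ≃g cubeGraph (m + 1))
    (i : Fin (m + 1)) (b : Bool) :
    ∃ F, IsCube G F ∧ F ⊂ C ∧ C.card = 2 * F.card ∧ ∀ y (hy : y ∈ C), φ ⟨y, hy⟩ i = b → y ∈ F := by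
  let f : cubeGraph m ↪g G :=
    (Embedding.induce _).comp (φ.symm.toEmbedding.comp (facetEmbedding i b))
  have hsub : univ.map f.toEmbedding ⊆ C := by
    intro y hy
    obtain ⟨x, -, rfl⟩ := mem_map.1 hy
    exact (φ.symm _).2
  have hcard : C.card = 2 * (univ.map f.toEmbedding).card := by
    rw [card_eq_two_pow_of_iso φ, card_map, card_univ]
    simp [pow_succ, mul_comm]
  refine ⟨_, isCube_map f, ssubset_of_subset_of_ne hsub ?_, hcard, fun y hy hyb => ?_⟩
  · intro h
    have : 0 < C.card := card_eq_two_pow_of_iso φ ▸ by positivity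
    rw [h] at hcard
    omega
  · refine mem_map.2 ⟨Fin.removeNth i (φ ⟨y, hy⟩), mem_univ _, ?_⟩
    change ((φ.symm (Fin.insertNth i b (Fin.removeNth i (φ ⟨y, hy⟩)))) : V) = y
    rw [← hyb, Fin.insertNth_self_removeNth, RelIso.symm_apply_apply]

end CubesInGraph

section Median

variable {V : Type*} {G : SimpleGraph V}

lemma eq_or_eq_of_mem_interval_of_adj {x y m : V} (hxy : G.Adj x y) (hm : m ∈ interval G x y) :
    m = x ∨ m = y := by
  have hsum : G.dist x m + G.dist m y = 1 := by
    rw [← dist_eq_one_iff_adj.2 hxy]; exact hm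
  rcases Nat.add_eq_one_iff.1 hsum with ⟨hxm, hmy⟩ | ⟨hxm, hmy⟩
  · have hreach : G.Reachable x m := hxy.reachable.trans (dist_eq_one_iff_adj.1 hmy).reachable.symm
    exact Or.inl (hreach.dist_eq_zero_iff.1 hxm).symm
  · have hreach : G.Reachable m y := (dist_eq_one_iff_adj.1 hxm).reachable.symm.trans hxy.reachable
    exact Or.inr (hreach.dist_eq_zero_iff.1 hmy)

lemma mem_interval_of_adj_of_adj {a p b : V} (hap : G.Adj a p) (hpb : G.Adj p b)
    (hab : G.dist a b = 2) : p ∈ interval G a b := by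
  change G.dist a p + G.dist p b = G.dist a b
  rw [hab, dist_eq_one_iff_adj.2 hap, dist_eq_one_iff_adj.2 hpb]

namespace MedianGraph

lemma not_adj_of_adj_of_adj (hmed : MedianGraph G) {x y z : V} (hxy : G.Adj x y)
    (hxz : G.Adj x z) : ¬ G.Adj y z := fun hyz => by
  obtain ⟨m, ⟨hm₁, hm₂, hm₃⟩, -⟩ := hmed x y z
  rcases eq_or_eq_of_mem_interval_of_adj hxy hm₁ with rfl | rfl
  · rcases eq_or_eq_of_mem_interval_of_adj hyz hm₂ with rfl | rfl
    · exact hxy.ne rfl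
    · exact hxz.ne rfl
  · rcases eq_or_eq_of_mem_interval_of_adj hxz.symm hm₃ with rfl | rfl
    · exact hyz.ne rfl
    · exact hxy.ne rfl

lemma dist_eq_two_of_adj_of_adj (hmed : MedianGraph G) {p a b : V} (hab : a ≠ b)
    (hpa : G.Adj p a) (hpb : G.Adj p b) : G.dist a b = 2 := by
  have hle : G.dist a b ≤ 2 := dist_le (.cons hpa.symm (.cons hpb .nil))
  have h₀ : G.dist a b ≠ 0 := fun h =>
    hab ((hpa.symm.reachable.trans hpb.reachable).dist_eq_zero_iff.1 h)
  have h₁ : G.dist a b ≠ 1 := fun h => hmed.not_adj_of_adj_of_adj hpa hpb (dist_eq_one_iff_adj.1 h)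
  omega

/-- No `K_{2,3}`: both `p` and `q` are medians of `a, b, c`. -/
lemma eq_of_adj_of_adj_of_adj (hmed : MedianGraph G) {p q a b c : V} (hab : a ≠ b) (hbc : b ≠ c)
    (hca : c ≠ a) (hpa : G.Adj p a) (hpb : G.Adj p b) (hpc : G.Adj p c)
    (hqa : G.Adj q a) (hqb : G.Adj q b) (hqc : G.Adj q c) : p = q := by
  have hab₂ := hmed.dist_eq_two_of_adj_of_adj hab hpa hpb
  have hbc₂ := hmed.dist_eq_two_of_adj_of_adj hbc hpb hpc
  have hca₂ := hmed.dist_eq_two_of_adj_of_adj hca hpc hpa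
  have isMedian {r : V} (hra : G.Adj r a) (hrb : G.Adj r b) (hrc : G.Adj r c) :
      r ∈ interval G a b ∧ r ∈ interval G b c ∧ r ∈ interval G c a :=
    ⟨mem_interval_of_adj_of_adj hra.symm hrb hab₂, mem_interval_of_adj_of_adj hrb.symm hrc hbc₂,
      mem_interval_of_adj_of_adj hrc.symm hra hca₂⟩
  exact (hmed a b c).unique (isMedian hpa hpb hpc) (isMedian hqa hqb hqc)

/-- The completion `r` of the square inside `S`, together with `w` and `z`, gives three common
neighbours of `a` and `b`, so two of them coincide. -/
lemma mem_cube_of_adj_of_adj (hmed : MedianGraph G) {S : Set V} {n : ℕ}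
    (φ : G.induce S ≃g cubeGraph n) {w a b z : V} (ha : a ∈ S) (hb : b ∈ S) (hz : z ∈ S)
    (hab : a ≠ b) (hza : G.Adj z a) (hzb : G.Adj z b) (hwa : G.Adj w a) (hwb : G.Adj w b) :
    w ∈ S := by
  obtain ⟨r, hrz, hra, hrb⟩ := cubeGraph_exists_square (z := φ ⟨z, hz⟩) (w₁ := φ ⟨a, ha⟩)
    (w₂ := φ ⟨b, hb⟩) (φ.map_adj_iff.2 hza) (φ.map_adj_iff.2 hzb)
    fun h => hab (congrArg Subtype.val (φ.injective h))
  by_cases hwz : w = z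
  · exact hwz ▸ hz
  by_cases hwr : w = φ.symm r
  · exact hwr ▸ (φ.symm r).2
  have adj {x : S} (hrx : (cubeGraph n).Adj r (φ x)) : G.Adj (φ.symm r) x := by
    simpa using φ.symm.map_adj_iff.2 hrx
  have hrz' : (φ.symm r : V) ≠ z := fun h =>
    hrz (φ.symm.injective (Subtype.ext (by simpa using h)))
  exact absurd (hmed.eq_of_adj_of_adj_of_adj hwr hrz' (Ne.symm hwz) hwa.symm (adj hra).symm hza.symm
    hwb.symm (adj hrb).symm hzb.symm) hab

/-- Induct on the distance from `v` inside the cube `T`: a vertex at distance `≥ 2` closes a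
square whose three other vertices are closer to `v`. -/
lemma subset_of_neighborSet_subset (hmed : MedianGraph G) {S T : Set V} {n k : ℕ}
    (φ : G.induce S ≃g cubeGraph n) (ψ : G.induce T ≃g cubeGraph k) {v : V} (hvS : v ∈ S)
    (hvT : v ∈ T) (hnbrs : G.neighborSet v ⊆ S) : T ⊆ S := by
  suffices h : ∀ p, (ψ.symm p : V) ∈ S from fun w hw => by simpa using h (ψ ⟨w, hw⟩)
  have adj {x y} (hxy : (cubeGraph k).Adj x y) : G.Adj (ψ.symm x) (ψ.symm y) :=
    ψ.symm.map_adj_iff.2 hxy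
  intro p
  induction h : hammingDist (ψ ⟨v, hvT⟩) p using Nat.strong_induction_on generalizing p with
  | _ t ih =>
  obtain rfl | rfl | h₂ : t = 0 ∨ t = 1 ∨ 2 ≤ t := by omega
  · rw [← hammingDist_eq_zero.1 h, RelIso.symm_apply_apply]
    exact hvS
  · have hv := adj (cubeGraph_adj.2 h)
    rw [RelIso.symm_apply_apply] at hv
    exact hnbrs hv
  · obtain ⟨a, b, z, hab, hpa, hpb, hza, hzb, ha, hb, hz⟩ := cubeGraph_exists_square_closer (h ▸ h₂)
    exact hmed.mem_cube_of_adj_of_adj φ (ih _ (h ▸ ha) a rfl) (ih _ (h ▸ hb) b rfl)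
      (ih _ (h ▸ hz) z rfl) (fun hab' => hab (ψ.symm.injective (Subtype.ext hab')))
      (adj hza) (adj hzb) (adj hpa) (adj hpb)

end MedianGraph

end Median

lemma subset_boundaryVertices_of_facet {V : Type*} {G : SimpleGraph V} {v : V} {C F : Finset V}
    (hC : C ∈ cells G) (hcorner : ∀ D ∈ cells G, v ∈ D → D ⊆ C) (hF : F ∈ cells G) (hFC : F ⊂ C)
    (hcard : C.card = 2 * F.card) (hvF : v ∈ F) : (F : Set V) ⊆ boundaryVertices G :=
  fun _ hx => ⟨F, hF, hx, fun hmax => hmax.2 C hC hFC, C, ⟨hC, hFC, hcard⟩,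
    fun D ⟨hD, hFD, hDcard⟩ => eq_of_subset_of_card_le (hcorner D hD (hFD.subset hvF)) (by omega)⟩

theorem median_corner_on_boundary_general {V : Type*} (G : SimpleGraph V)
    (hmed : MedianGraph G)
    (v : V) (C : Finset V) (n : ℕ)
    (hiso : Nonempty (G.induce (C : Set V) ≃g cubeGraph n))
    (hv : v ∈ C) (hnbrs : ∀ u : V, G.Adj v u → u ∈ C)
    (o : V) (ho : o ∈ C) (hopp : G.dist v o = n) :
    ∀ x ∈ C, x ≠ o → x ∈ boundaryVertices G := by
  obtain ⟨φ⟩ := hiso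
  have hcorner : ∀ D ∈ cells G, v ∈ D → D ⊆ C := fun D ⟨_, _, ⟨ψ⟩⟩ hvD =>
    coe_subset.1 (hmed.subset_of_neighborSet_subset φ ψ hv hvD fun u => hnbrs u)
  intro x hx hxo
  obtain ⟨i, hxi⟩ : ∃ i, φ ⟨x, hx⟩ i ≠ φ ⟨o, ho⟩ i :=
    not_forall.1 fun h => hxo (congrArg Subtype.val (φ.injective (funext h)))
  obtain ⟨m, rfl⟩ := Nat.exists_eq_add_one_of_ne_zero i.pos.ne'
  have hvi : φ ⟨v, hv⟩ i ≠ φ ⟨o, ho⟩ i := apply_ne_apply_of_dist_eq φ hopp i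
  have hxv : φ ⟨x, hx⟩ i = φ ⟨v, hv⟩ i := (Bool.eq_not_iff.2 hxi).trans (Bool.eq_not_iff.2 hvi).symm
  obtain ⟨F, hF, hFC, hcard, hmemF⟩ := exists_facet φ i (φ ⟨v, hv⟩ i)
  have hvF : v ∈ F := hmemF v hv rfl
  exact subset_boundaryVertices_of_facet ⟨⟨v, hv⟩, _, ⟨φ⟩⟩ hcorner ⟨⟨v, hvF⟩, hF⟩ hFC hcard hvF
    (hmemF x hx hxv)

/-- Corners lie on the boundary: if `v` is a corner of a finite median graph `G` with
corner cube `C` and opposite vertex `o`, then every vertex of `C` other than `o` is a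
vertex of the combinatorial boundary of `X_cube(G)`. -/
theorem median_corner_on_boundary {V : Type*} [Fintype V] (G : SimpleGraph V)
    (hconn : G.Connected) (hmed : MedianGraph G)
    (v : V) (C : Finset V) (n : ℕ)
    (hiso : Nonempty (G.induce (C : Set V) ≃g cubeGraph n))
    (hv : v ∈ C) (hnbrs : ∀ u : V, G.Adj v u → u ∈ C)
    (o : V) (ho : o ∈ C) (hopp : G.dist v o = n) :
    ∀ x ∈ C, x ≠ o → x ∈ boundaryVertices G :=
  median_corner_on_boundary_general G hmed v C n hiso hv hnbrs o ho hopp
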